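/- arXiv:1006.3627 — 3 statements merged into one kernel-verified Lean document; each statement's English description precedes it below -/
import Mathlib

section
/- A weakly-reversible CRN G is catalytic if and only if the ideal (E_G) is strictly contained in its saturation (E_G) : (x_1·x_2·...·x_s)^∞. -/
open MvPolynomial Relation

/-- A chemical reaction network on `s` species: a finite directed graph whose
vertices are labeled by distinct monomials (exponent vectors). -/
structure CRN (s : ℕ) where
  n : ℕ
  edge : Fin n → Fin n → Prop
  ψ : Fin n → (Fin s → ℕ)
  inj : Function.Injective ψ

variable {s : ℕ}

/-- Weak reversibility: every connected component of the reaction graph is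
strongly connected, i.e. undirected reachability implies directed reachability. -/
def CRN.weaklyReversible (G : CRN s) : Prop :=
  ∀ i j, Relation.ReflTransGen (fun a b => G.edge a b ∨ G.edge b a) i j →
    Relation.ReflTransGen G.edge i j

/-- Directed edge of the event-graph: `(N·ψ i, N·ψ j)` for an edge `(i,j)` of `G`
and a monic monomial `N` (exponent vector `c`). -/
def CRN.eventEdge (G : CRN s) (M N : Fin s → ℕ) : Prop :=
  ∃ i j c, G.edge i j ∧ M = c + G.ψ i ∧ N = c + G.ψ j

/-- Directed reachability in the event-graph. -/
def CRN.eventReach (G : CRN s) (M N : Fin s → ℕ) : Prop :=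
  Relation.ReflTransGen G.eventEdge M N

/-- Path-connectedness (in the undirected sense) in the event-graph. -/
def CRN.connected (G : CRN s) (M N : Fin s → ℕ) : Prop :=
  Relation.ReflTransGen (fun a b => G.eventEdge a b ∨ G.eventEdge b a) M N

/-- gcd of two monomials, as exponent vectors. -/
def mgcd (M N : Fin s → ℕ) : Fin s → ℕ := fun i => min (M i) (N i)

/-- A weakly-reversible CRN is catalytic iff some path-connected monomials `M, N`
in the event-graph become disconnected after dividing by their gcd. -/
def CRN.catalytic (G : CRN s) : Prop :=
  ∃ M N : Fin s → ℕ, G.connected M N ∧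
    ¬ G.connected (M - mgcd M N) (N - mgcd M N)

/-- The monic monomial with exponent vector `e`, as a polynomial. -/
noncomputable def mon (k : Type*) [CommSemiring k] (e : Fin s → ℕ) :
    MvPolynomial (Fin s) k :=
  MvPolynomial.monomial (Finsupp.equivFunOnFinite.symm e) 1

/-- The set of binomials of the associated event-system `E_G` (one binomial for
each edge of the underlying undirected graph of `G`). -/
def CRN.eventSystem (G : CRN s) (k : Type*) [CommRing k] :
    Set (MvPolynomial (Fin s) k) :=
  {p | ∃ i j, (G.edge i j ∨ G.edge j i) ∧ p = mon k (G.ψ i) - mon k (G.ψ j)}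

/-- The ideal `(E_G)` generated by the associated event-system. -/
noncomputable def CRN.eventIdeal (G : CRN s) (k : Type*) [CommRing k] :
    Ideal (MvPolynomial (Fin s) k) :=
  Ideal.span (G.eventSystem k)

/-- The stoichiometric subspace of `G`. -/
def CRN.stoich (G : CRN s) : Submodule ℝ (Fin s → ℝ) :=
  Submodule.span ℝ
    {v | ∃ i j, G.edge i j ∧ v = fun t => (G.ψ j t : ℝ) - (G.ψ i t : ℝ)}

/-- `Z` is a siphon of `G`. -/
def CRN.siphon (G : CRN s) (Z : Set (Fin s)) : Prop :=
  Z.Nonempty ∧ ∀ i j, G.edge i j →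
    (∃ l ∈ Z, G.ψ j l ≠ 0) → (∃ l ∈ Z, G.ψ i l ≠ 0)

/-- `Z` is a critical siphon of `G`: a siphon whose zero pattern is realized by a
nonnegative point whose invariant polyhedron meets the positive orthant. -/
def CRN.criticalSiphon (G : CRN s) (Z : Set (Fin s)) : Prop :=
  G.siphon Z ∧ ∃ z : Fin s → ℝ, (∀ i, 0 ≤ z i) ∧ Z = {i | z i = 0} ∧
    ∃ p : Fin s → ℝ, (∀ i, 0 < p i) ∧ p - z ∈ G.stoich

/-- The underlying undirected CRN (every reaction made reversible). -/
def CRN.sym (G : CRN s) : CRN s :=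
  ⟨G.n, fun i j => G.edge i j ∨ G.edge j i, G.ψ, G.inj⟩

/-- A point `a` is a zero of all binomials in the event-system of `G`. -/
def CRN.vanishesAt (G : CRN s) {k : Type*} [CommRing k] (a : Fin s → k) : Prop :=
  ∀ i j, G.edge i j → ∏ t, a t ^ G.ψ i t = ∏ t, a t ^ G.ψ j t

/-- The saturation `I : f^∞`, as a set. -/
def satSet {R : Type*} [CommRing R] (I : Ideal R) (f : R) : Set R :=
  {g | ∃ m : ℕ, 0 < m ∧ f ^ m * g ∈ I}


/-!
Connectivity in the event-graph is invariant under translation, hence an additive congruence `~`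
on exponent vectors, and `(E_G)` is the kernel of the induced map `k[x] → k[ℕ^s/~]`; in
particular `x^a - x^b ∈ (E_G)` iff `a ~ b`. If `G` is not catalytic, `ℕ^s/~` is cancellative, so
the image of `x_1⋯x_s` is a non-zero-divisor and the saturation adds nothing. If `G` is catalytic,
with `M ~ N` but `M/g ≁ N/g` for `g = gcd(M, N)`, then `x^{M/g} - x^{N/g}` lies in the saturation
(its product with `x^g` lies in `(E_G)`) but not in `(E_G)`.
-/

namespace AddMonoidAlgebra

variable {k M N : Type*}

theorem isLeftRegular_single_one [Semiring k] [AddMonoid M] [IsLeftCancelAdd M] (m : M) :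
    IsLeftRegular (single m (1 : k)) := by
  intro x y hxy
  ext d
  have hcoeff : ∀ z : AddMonoidAlgebra k M, (single m (1 : k) * z).coeff (m + d) = z.coeff d :=
    fun z => by rw [coeff_single_mul_eq_mul_coeff d (fun _ _ => add_right_inj m), one_mul]
  rw [← hcoeff x, ← hcoeff y]
  exact congrArg (fun z => z.coeff (m + d)) hxy

/-- Modulo binomials `single a 1 - single b 1` with `f a = f b`, every element is congruent to
one supported on a chosen section of `f`, which vanishes when its image under `f` does. -/
theorem ker_mapDomainRingHom_le [Ring k] [AddMonoid M] [AddMonoid N] {f : M →+ N}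
    (hf : Function.Surjective f) {I : Ideal (AddMonoidAlgebra k M)}
    (hI : ∀ a b, f a = f b → single a 1 - single b 1 ∈ I) :
    RingHom.ker (mapDomainRingHom k f) ≤ I := by
  set σ := Function.surjInv hf
  have sub_normalForm_mem : ∀ x : AddMonoidAlgebra k M, x - mapDomain (σ ∘ f) x ∈ I := by
    intro x
    induction x using induction_linear with
    | zero => simp
    | add x y hx hy =>
      rw [mapDomain_add, add_sub_add_comm]
      exact I.add_mem hx hy
    | single a r =>
      have := I.mul_mem_left (single 0 r) (hI a (σ (f a)) (Function.surjInv_eq hf _).symm)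
      simpa [mul_sub, single_mul_single, mapDomain_single] using this
  intro x hx
  have normalForm_eq_zero : mapDomain (σ ∘ f) x = 0 := by
    have hfx : mapDomain f x = 0 := hx
    rw [show mapDomain (σ ∘ f) x = mapDomain σ (mapDomain f x) by
      ext1; simp [mapDomain, Finsupp.mapDomain_comp], hfx, mapDomain_zero]
  simpa [normalForm_eq_zero] using sub_normalForm_mem x

end AddMonoidAlgebra

theorem subset_satSet {R : Type*} [CommRing R] (I : Ideal R) (f : R) :
    (I : Set R) ⊆ satSet I f :=
  fun _ hg => ⟨1, one_pos, I.mul_mem_left _ hg⟩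

theorem satSet_ker_subset {R S : Type*} [CommRing R] [Semiring S] (φ : R →+* S) {f : R}
    (hf : IsLeftRegular (φ f)) : satSet (RingHom.ker φ) f ⊆ RingHom.ker φ := by
  rintro g ⟨m, -, hm⟩
  rw [RingHom.mem_ker] at hm
  rw [SetLike.mem_coe, RingHom.mem_ker]
  exact hf.pow m (by simpa using hm)

theorem mgcd_le_left (a b : Fin s → ℕ) : mgcd a b ≤ a := fun i => min_le_left (a i) (b i)

theorem mgcd_le_right (a b : Fin s → ℕ) : mgcd a b ≤ b := fun i => min_le_right (a i) (b i)

section Monomials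

variable (k : Type*) [CommSemiring k]

theorem mon_add (a b : Fin s → ℕ) : mon k (a + b) = mon k a * mon k b := by
  rw [mon, mon, mon, monomial_mul, one_mul]
  congr 2
  exact Finsupp.ext fun i => by simp

theorem mon_eq_prod_X_pow (e : Fin s → ℕ) : mon k e = ∏ i, X i ^ e i := by
  rw [mon, monomial_eq, C_1, one_mul, Finsupp.prod_fintype _ _ fun _ => pow_zero _]
  rfl

theorem mon_dvd_prod_X_pow (e : Fin s → ℕ) :
    mon k e ∣ (∏ i, X i : MvPolynomial (Fin s) k) ^ (∑ i, e i + 1) := by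
  rw [mon_eq_prod_X_pow, ← Finset.prod_pow]
  refine Finset.prod_dvd_prod_of_dvd _ _ fun i _ => pow_dvd_pow _ ?_
  exact (Finset.single_le_sum (fun j _ => Nat.zero_le (e j)) (Finset.mem_univ i)).trans
    (Nat.le_succ _)

theorem mem_satSet_of_mon_mul_mem {k : Type*} [CommRing k] {I : Ideal (MvPolynomial (Fin s) k)}
    (e : Fin s → ℕ) {x : MvPolynomial (Fin s) k} (h : mon k e * x ∈ I) :
    x ∈ satSet I (∏ i, X i) := by
  obtain ⟨q, hq⟩ := mon_dvd_prod_X_pow k e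
  refine ⟨∑ i, e i + 1, Nat.succ_pos _, ?_⟩
  rw [hq, mul_right_comm]
  exact I.mul_mem_right _ h

end Monomials

namespace CRN

variable (G : CRN s)

theorem connected_eq_eqvGen : G.connected = EqvGen G.eventEdge :=
  EqvGen.reflTransGen_symmGen G.eventEdge

theorem eventEdge_add_right {a b : Fin s → ℕ} (h : G.eventEdge a b) (c : Fin s → ℕ) :
    G.eventEdge (a + c) (b + c) := by
  obtain ⟨i, j, d, hij, rfl, rfl⟩ := h
  exact ⟨i, j, d + c, hij, add_right_comm _ _ _, add_right_comm _ _ _⟩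

theorem connected_add_right {a b : Fin s → ℕ} (h : G.connected a b) (c : Fin s → ℕ) :
    G.connected (a + c) (b + c) :=
  h.lift (· + c) fun _ _ => Or.imp (G.eventEdge_add_right · c) (G.eventEdge_add_right · c)

def eventCon : AddCon (Fin s → ℕ) where
  r := G.connected
  iseqv := G.connected_eq_eqvGen ▸ EqvGen.is_equivalence _
  add' {a b c d} hab hcd := (G.connected_add_right hab c).trans <| by
    rw [add_comm b c, add_comm b d]
    exact G.connected_add_right hcd b

noncomputable def eventClass : (Fin s →₀ ℕ) →+ G.eventCon.Quotient :=
  G.eventCon.mk'.comp Finsupp.addEquivFunOnFinite.toAddMonoidHom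

theorem eventClass_apply (x : Fin s →₀ ℕ) : G.eventClass x = (⇑x : G.eventCon.Quotient) :=
  rfl

theorem eventClass_surjective : Function.Surjective G.eventClass :=
  AddCon.mk'_surjective.comp Finsupp.addEquivFunOnFinite.surjective

variable (k : Type*) [CommRing k]

theorem mapDomainRingHom_eventClass_mon (e : Fin s → ℕ) :
    AddMonoidAlgebra.mapDomainRingHom k G.eventClass (mon k e) =
      AddMonoidAlgebra.single (e : G.eventCon.Quotient) 1 := by
  rw [mon, ← single_eq_monomial, AddMonoidAlgebra.mapDomainRingHom_apply,
    AddMonoidAlgebra.mapDomain_single]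
  rfl

theorem mon_sub_mon_mem_eventIdeal_of_eventEdge {a b : Fin s → ℕ}
    (h : G.eventEdge a b ∨ G.eventEdge b a) : mon k a - mon k b ∈ G.eventIdeal k := by
  obtain ⟨i, j, c, hij, rfl, rfl⟩ :
      ∃ i j c, (G.edge i j ∨ G.edge j i) ∧ a = c + G.ψ i ∧ b = c + G.ψ j := by
    rcases h with ⟨i, j, c, h, ha, hb⟩ | ⟨i, j, c, h, hb, ha⟩
    exacts [⟨i, j, c, .inl h, ha, hb⟩, ⟨j, i, c, .inr h, ha, hb⟩]
  rw [mon_add, mon_add, ← mul_sub]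
  exact Ideal.mul_mem_left _ _ (Ideal.subset_span ⟨i, j, hij, rfl⟩)

theorem mon_sub_mon_mem_eventIdeal {a b : Fin s → ℕ} (h : G.connected a b) :
    mon k a - mon k b ∈ G.eventIdeal k := by
  induction h with
  | refl => simp
  | tail _ hbc ih =>
    rw [← sub_add_sub_cancel]
    exact add_mem ih (G.mon_sub_mon_mem_eventIdeal_of_eventEdge k hbc)

theorem eventIdeal_eq_ker :
    G.eventIdeal k = RingHom.ker (AddMonoidAlgebra.mapDomainRingHom k G.eventClass) := by
  refine le_antisymm ?_ (AddMonoidAlgebra.ker_mapDomainRingHom_le G.eventClass_surjective ?_)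
  · rw [eventIdeal, Ideal.span_le]
    rintro _ ⟨i, j, hij, rfl⟩
    have hconn : G.connected (G.ψ i) (G.ψ j) :=
      .single (hij.imp (fun h => ⟨i, j, 0, h, by simp, by simp⟩)
        (fun h => ⟨j, i, 0, h, by simp, by simp⟩))
    rw [SetLike.mem_coe, RingHom.mem_ker, map_sub, mapDomainRingHom_eventClass_mon,
      mapDomainRingHom_eventClass_mon, (AddCon.eq G.eventCon).2 hconn, sub_self]
  · intro a b hab
    rw [eventClass_apply, eventClass_apply, AddCon.eq] at hab
    simpa only [mon, Finsupp.equivFunOnFinite_symm_coe, single_eq_monomial] using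
      G.mon_sub_mon_mem_eventIdeal k hab

theorem mon_sub_mon_mem_eventIdeal_iff [Nontrivial k] {a b : Fin s → ℕ} :
    mon k a - mon k b ∈ G.eventIdeal k ↔ G.connected a b := by
  rw [eventIdeal_eq_ker, RingHom.mem_ker, map_sub, mapDomainRingHom_eventClass_mon,
    mapDomainRingHom_eventClass_mon, sub_eq_zero, AddMonoidAlgebra.single_left_inj one_ne_zero]
  exact AddCon.eq G.eventCon

theorem connected_of_connected_add_left_of_not_catalytic (hG : ¬G.catalytic)
    {a b c : Fin s → ℕ} (h : G.connected (c + a) (c + b)) : G.connected a b := by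
  have hgcd : mgcd (c + a) (c + b) = c + mgcd a b := funext fun i => min_add_add_left _ _ _
  have hred : G.connected (a - mgcd a b) (b - mgcd a b) := by
    simpa only [hgcd, add_tsub_add_eq_tsub_left] using not_not.1 fun h' => hG ⟨_, _, h, h'⟩
  simpa only [tsub_add_cancel_of_le (mgcd_le_left a b),
    tsub_add_cancel_of_le (mgcd_le_right a b)] using
    G.connected_add_right hred (mgcd a b)

theorem isLeftCancelAdd_of_not_catalytic (hG : ¬G.catalytic) :
    IsLeftCancelAdd G.eventCon.Quotient := by
  refine ⟨fun c a b h => ?_⟩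
  induction c using AddCon.induction_on with | H c =>
  induction a using AddCon.induction_on with | H a =>
  induction b using AddCon.induction_on with | H b =>
  dsimp only at h
  rw [← AddCon.coe_add, ← AddCon.coe_add, AddCon.eq] at h
  exact (AddCon.eq _).2 (G.connected_of_connected_add_left_of_not_catalytic hG h)

theorem exists_mem_satSet_not_mem_eventIdeal [Nontrivial k] (hG : G.catalytic) :
    ∃ w ∈ satSet (G.eventIdeal k) (∏ i, X i), w ∉ G.eventIdeal k := by
  obtain ⟨M, N, hMN, hred⟩ := hG
  refine ⟨mon k (M - mgcd M N) - mon k (N - mgcd M N), mem_satSet_of_mon_mul_mem (mgcd M N) ?_,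
    (G.mon_sub_mon_mem_eventIdeal_iff k).not.2 hred⟩
  rw [mul_sub, ← mon_add, ← mon_add, add_tsub_cancel_of_le (mgcd_le_left M N),
    add_tsub_cancel_of_le (mgcd_le_right M N)]
  exact G.mon_sub_mon_mem_eventIdeal k hMN

theorem satSet_subset_eventIdeal_of_not_catalytic (hG : ¬G.catalytic) :
    satSet (G.eventIdeal k) (∏ i, X i) ⊆ G.eventIdeal k := by
  have := G.isLeftCancelAdd_of_not_catalytic hG
  have hprod : (∏ i, X i : MvPolynomial (Fin s) k) = mon k 1 := by simp [mon_eq_prod_X_pow]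
  rw [eventIdeal_eq_ker]
  refine satSet_ker_subset _ ?_
  rw [hprod, mapDomainRingHom_eventClass_mon]
  exact AddMonoidAlgebra.isLeftRegular_single_one _

end CRN

theorem catalytic_iff_ssubset_saturation_general {k : Type*} [Field k] {s : ℕ} (G : CRN s) :
    G.catalytic ↔
      (G.eventIdeal k : Set (MvPolynomial (Fin s) k)) ⊂
        satSet (G.eventIdeal k) (∏ i, MvPolynomial.X i) := by
  rw [ssubset_iff_subset_not_subset, and_iff_right (subset_satSet _ _)]
  constructor
  · rintro hG hsat
    obtain ⟨w, hw_sat, hw⟩ := G.exists_mem_satSet_not_mem_eventIdeal k hG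
    exact hw (hsat hw_sat)
  · exact not_imp_comm.1 (G.satSet_subset_eventIdeal_of_not_catalytic k)

/-- `G` is catalytic iff `(E_G)` is strictly contained in its saturation with
respect to `x_1 ⋯ x_s`. -/
theorem catalytic_iff_ssubset_saturation {k : Type*} [Field k] [CharZero k] {s : ℕ}
    (G : CRN s) (hwr : G.weaklyReversible) :
    G.catalytic ↔
      (G.eventIdeal k : Set (MvPolynomial (Fin s) k)) ⊂
        satSet (G.eventIdeal k) (∏ i, MvPolynomial.X i) :=
  catalytic_iff_ssubset_saturation_general G
end

section
/- Every atomic weakly-reversible CRN is non-catalytic, and hence every weakly-reversible atomic CRN has no critical siphons. -/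
open MvPolynomial Relation

variable {s : ℕ}

/-- `x_i` is an atom of `G`: the monomial `x_i` is an isolated node of the
event-graph. -/
def CRN.isAtomSpecies {s : ℕ} (G : CRN s) (i : Fin s) : Prop :=
  ∀ M : Fin s → ℕ, ¬ G.eventEdge (Pi.single i 1) M ∧ ¬ G.eventEdge M (Pi.single i 1)

/-- An atomic monomial: all its variables are atoms. -/
def CRN.atomicMon {s : ℕ} (G : CRN s) (M : Fin s → ℕ) : Prop :=
  ∀ j, M j ≠ 0 → G.isAtomSpecies j

/-- `G` is atomic: every connected component of the event-graph contains
exactly one atomic monomial. -/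
def CRN.atomic {s : ℕ} (G : CRN s) : Prop :=
  ∀ M : Fin s → ℕ, ∃! A : Fin s → ℕ, G.atomicMon A ∧ G.connected M A

/-! In an atomic network, sending a monomial to the unique atomic monomial of its component is
additive: sums of connected pairs are connected and sums of atomic monomials are atomic. As this
map separates components, connectivity can be cancelled, `c + M ~ c + N → M ~ N`, which is
non-catalysis.

For a critical siphon `Z`, the stoichiometric subspace contains a vector that is positive on `Z`.
Scaling and rounding turns it into an integer combination of reaction vectors, i.e. a difference
`N - M` of connected monomials with `M < N` on `Z`. Cancelling `gcd(M, N)` leaves connected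
monomials, the first vanishing on `Z` and the second not. Weak reversibility turns the connection
into a directed path of the event-graph, along which a siphon that is empty at the start stays
empty. -/

open Filter

theorem exists_int_combination_pos_of_real {ι σ : Type*} [Fintype ι] [Finite σ]
    (v : ι → σ → ℤ) (a : ι → ℝ) (Z : Set σ)
    (h : ∀ t ∈ Z, 0 < ∑ k, a k * v k t) :
    ∃ c : ι → ℤ, ∀ t ∈ Z, 0 < ∑ k, c k * v k t := by
  -- Rounding down the coefficients of `N • a` costs at most `∑ k, |v k t|`, whatever `N` is.
  have hlarge :
      ∀ᶠ N : ℕ in atTop, ∀ t ∈ Z, ∑ k, |(v k t : ℝ)| < N * ∑ k, a k * v k t := by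
    refine eventually_all.2 fun t => ?_
    by_cases ht : t ∈ Z
    · exact ((tendsto_natCast_atTop_atTop.atTop_mul_const (h t ht)).eventually_gt_atTop _).mono
        fun _ hN _ => hN
    · exact .of_forall fun _ ht' => absurd ht' ht
  obtain ⟨N, hN⟩ := hlarge.exists
  refine ⟨fun k => ⌊N * a k⌋, fun t ht => ?_⟩
  have hround : ∀ k, N * a k * v k t - |(v k t : ℝ)| ≤ ⌊N * a k⌋ * v k t := fun k => by
    rcases abs_cases (v k t : ℝ) with ⟨habs, _⟩ | ⟨habs, _⟩ <;> rw [habs] <;>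
      nlinarith [Int.floor_le (N * a k), Int.sub_one_lt_floor (N * a k)]
  have hpos : (0 : ℝ) < ∑ k, (⌊N * a k⌋ : ℝ) * v k t :=
    calc (0 : ℝ) < N * ∑ k, a k * v k t - ∑ k, |(v k t : ℝ)| := sub_pos.2 (hN t ht)
      _ = ∑ k, (N * a k * v k t - |(v k t : ℝ)|) := by
        rw [Finset.mul_sum, ← Finset.sum_sub_distrib]
        simp only [mul_assoc]
      _ ≤ _ := Finset.sum_le_sum fun k _ => hround k
  exact_mod_cast hpos

namespace CRN

variable {G : CRN s}

theorem connected.symm {M N : Fin s → ℕ} (h : G.connected M N) : G.connected N M :=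
  have : Std.Symm fun a b => G.eventEdge a b ∨ G.eventEdge b a := ⟨fun _ _ hab => hab.symm⟩
  Std.Symm.symm (r := ReflTransGen _) _ _ h

theorem eventEdge.add_left {M N : Fin s → ℕ} (h : G.eventEdge M N)
    (c : Fin s → ℕ) : G.eventEdge (c + M) (c + N) := by
  obtain ⟨i, j, d, hij, rfl, rfl⟩ := h
  exact ⟨i, j, c + d, hij, (add_assoc _ _ _).symm, (add_assoc _ _ _).symm⟩

theorem connected.add_left {M N : Fin s → ℕ} (h : G.connected M N)
    (c : Fin s → ℕ) : G.connected (c + M) (c + N) := by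
  induction h with
  | refl => exact .refl
  | tail _ hstep ih => exact ih.tail (hstep.imp (·.add_left c) (·.add_left c))

theorem connected.add {M N P Q : Fin s → ℕ} (h₁ : G.connected M N)
    (h₂ : G.connected P Q) : G.connected (M + P) (N + Q) := by
  have hP : G.connected (M + P) (N + P) := by
    simpa only [add_comm _ P] using h₁.add_left P
  exact hP.trans (h₂.add_left N)

theorem connected_of_edge {i j : Fin G.n} (h : G.edge i j) : G.connected (G.ψ i) (G.ψ j) :=
  .single (.inl ⟨i, j, 0, h, (zero_add _).symm, (zero_add _).symm⟩)

theorem eventReach_of_reflTransGen_edge {i j : Fin G.n} (h : ReflTransGen G.edge i j)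
    (c : Fin s → ℕ) : G.eventReach (c + G.ψ i) (c + G.ψ j) := by
  induction h with
  | refl => exact .refl
  | tail _ hij ih => exact ih.tail ⟨_, _, c, hij, rfl, rfl⟩

theorem weaklyReversible.eventReach_of_connected (hwr : G.weaklyReversible)
    {M N : Fin s → ℕ} (h : G.connected M N) : G.eventReach M N := by
  induction h with
  | refl => exact .refl
  | tail _ hstep ih =>
    rcases hstep with hMN | ⟨i, j, c, hij, rfl, rfl⟩
    · exact ih.tail hMN
    · exact ih.trans (eventReach_of_reflTransGen_edge (hwr j i (.single (.inr hij))) c)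

theorem siphon.eq_zero_of_eventReach {Z : Set (Fin s)} (hZ : G.siphon Z)
    {P Q : Fin s → ℕ} (h : G.eventReach P Q) (hP : ∀ l ∈ Z, P l = 0) :
    ∀ l ∈ Z, Q l = 0 := by
  induction h with
  | refl => exact hP
  | tail _ hstep ih =>
    obtain ⟨i, j, c, hij, rfl, rfl⟩ := hstep
    have hsrc : ∀ l ∈ Z, c l = 0 ∧ G.ψ i l = 0 := fun l hl => by
      simpa only [Pi.add_apply, Nat.add_eq_zero_iff] using ih l hl
    have htgt : ∀ l ∈ Z, G.ψ j l = 0 := by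
      by_contra! hj
      obtain ⟨l, hl, hne⟩ := hZ.2 i j hij hj
      exact hne (hsrc l hl).2
    intro l hl
    simp only [Pi.add_apply, (hsrc l hl).1, htgt l hl, add_zero]

theorem atomicMon.add {A B : Fin s → ℕ} (hA : G.atomicMon A) (hB : G.atomicMon B) :
    G.atomicMon (A + B) := fun j hj => by
  by_cases hAj : A j = 0
  · exact hB j (by simpa [hAj] using hj)
  · exact hA j hAj

noncomputable def atomicRep (hat : G.atomic) (M : Fin s → ℕ) : Fin s → ℕ :=
  (hat M).exists.choose

theorem atomicMon_atomicRep (hat : G.atomic) (M : Fin s → ℕ) :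
    G.atomicMon (atomicRep hat M) :=
  (hat M).exists.choose_spec.1

theorem connected_atomicRep (hat : G.atomic) (M : Fin s → ℕ) :
    G.connected M (atomicRep hat M) :=
  (hat M).exists.choose_spec.2

theorem eq_atomicRep (hat : G.atomic) {M A : Fin s → ℕ} (hA : G.atomicMon A)
    (hMA : G.connected M A) : A = atomicRep hat M :=
  (hat M).unique ⟨hA, hMA⟩ (hat M).exists.choose_spec

theorem connected_iff_atomicRep_eq (hat : G.atomic) {M N : Fin s → ℕ} :
    G.connected M N ↔ atomicRep hat M = atomicRep hat N := by
  refine ⟨fun h => ?_, fun h => ?_⟩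
  · exact (eq_atomicRep hat (atomicMon_atomicRep hat N)
      (h.trans (connected_atomicRep hat N))).symm
  · exact (connected_atomicRep hat M).trans (h ▸ (connected_atomicRep hat N).symm)

theorem atomicRep_add (hat : G.atomic) (M N : Fin s → ℕ) :
    atomicRep hat (M + N) = atomicRep hat M + atomicRep hat N :=
  (eq_atomicRep hat ((atomicMon_atomicRep hat M).add (atomicMon_atomicRep hat N))
    ((connected_atomicRep hat M).add (connected_atomicRep hat N))).symm

theorem connected.of_add_left {c M N : Fin s → ℕ} (hat : G.atomic)
    (h : G.connected (c + M) (c + N)) : G.connected M N := by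
  rw [connected_iff_atomicRep_eq hat, atomicRep_add, atomicRep_add] at h
  exact (connected_iff_atomicRep_eq hat).2 (add_left_cancel h)

theorem connected.sub_mgcd {M N : Fin s → ℕ} (hat : G.atomic) (h : G.connected M N) :
    G.connected (M - mgcd M N) (N - mgcd M N) := by
  have hM : mgcd M N ≤ M := fun t => min_le_left _ _
  have hN : mgcd M N ≤ N := fun t => min_le_right _ _
  refine connected.of_add_left (c := mgcd M N) hat ?_
  rwa [add_tsub_cancel_of_le hM, add_tsub_cancel_of_le hN]

theorem atomic.not_catalytic (hat : G.atomic) : ¬ G.catalytic :=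
  fun ⟨_, _, h, hn⟩ => hn (h.sub_mgcd hat)

def connDiff (G : CRN s) : AddSubgroup (Fin s → ℤ) where
  carrier := {d | ∃ P Q, G.connected P Q ∧ d = fun t => (Q t : ℤ) - P t}
  zero_mem' := ⟨0, 0, .refl, by funext; simp⟩
  add_mem' := by
    rintro _ _ ⟨P, Q, h, rfl⟩ ⟨P', Q', h', rfl⟩
    refine ⟨P + P', Q + Q', h.add h', ?_⟩
    funext t
    simp only [Pi.add_apply, Nat.cast_add]
    ring
  neg_mem' := by
    rintro _ ⟨P, Q, h, rfl⟩
    exact ⟨Q, P, h.symm, by funext t; simp⟩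

theorem reactionVec_mem_connDiff {i j : Fin G.n} (h : G.edge i j) :
    (fun t => (G.ψ j t : ℤ) - G.ψ i t) ∈ G.connDiff :=
  ⟨G.ψ i, G.ψ j, connected_of_edge h, rfl⟩

theorem exists_mem_connDiff_pos {w : Fin s → ℝ} {Z : Set (Fin s)} (hw : w ∈ G.stoich)
    (hZ : ∀ t ∈ Z, 0 < w t) : ∃ d ∈ G.connDiff, ∀ t ∈ Z, 0 < d t := by
  obtain ⟨m, a, x, rfl⟩ := Submodule.mem_span_set'.1 hw
  choose I J hIJ hx using fun k => (x k).2
  obtain ⟨c, hc⟩ := _root_.exists_int_combination_pos_of_real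
    (fun k t => (G.ψ (J k) t : ℤ) - G.ψ (I k) t) a Z fun t ht => by
      simpa [hx] using hZ t ht
  refine ⟨∑ k, c k • fun t => (G.ψ (J k) t : ℤ) - G.ψ (I k) t,
    G.connDiff.sum_mem fun k _ => zsmul_mem (reactionVec_mem_connDiff (hIJ k)) _,
    fun t ht => by simpa using hc t ht⟩

end CRN

/-- Atomic weakly-reversible CRNs are non-catalytic and have no critical siphons. -/
theorem atomic_not_catalytic_no_criticalSiphon {s : ℕ} (G : CRN s)
    (hwr : G.weaklyReversible) (hat : G.atomic) :
    ¬ G.catalytic ∧ ∀ Z : Set (Fin s), ¬ G.criticalSiphon Z := by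
  refine ⟨hat.not_catalytic, ?_⟩
  rintro Z ⟨hsiph, z, -, rfl, p, hp, hmem⟩
  obtain ⟨l, hl⟩ := hsiph.1
  obtain ⟨_, ⟨P, Q, hPQ, rfl⟩, hlt⟩ :=
    CRN.exists_mem_connDiff_pos hmem fun t (ht : z t = 0) => by simpa [ht] using hp t
  have hP : ∀ t ∈ {i | z i = 0}, (P - mgcd P Q) t = 0 := fun t ht => by
    have := hlt t ht
    dsimp only at this
    simp only [Pi.sub_apply, mgcd]
    omega
  have hQ : (Q - mgcd P Q) l ≠ 0 := by
    have := hlt l hl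
    dsimp only at this
    simp only [Pi.sub_apply, mgcd]
    omega
  exact hQ (hsiph.eq_zero_of_eventReach
    (hwr.eventReach_of_connected (hPQ.sub_mgcd hat)) hP l hl)
end

section
/- Let G be a weakly-reversible CRN and Z a siphon of G. Then the 0/1 indicator point α, with α_i = 0 for i ∈ Z and α_i = 1 otherwise, is a zero of every binomial in the associated event-system E_G. -/
open MvPolynomial Relation

variable {s : ℕ}

/-!
At the indicator point a monomial evaluates to `0` if it involves a species of `Z` and to `1`
otherwise. For an edge `i → j`, the siphon condition says that if `ψ j` involves `Z` then so does
`ψ i`; weak reversibility gives a directed path `j → ⋯ → i`, along which the same condition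
transports the converse. So both ends of every edge evaluate to the same value.
-/

theorem CRN.siphon.exists_mem_ne_zero_of_reflTransGen {G : CRN s} {Z : Set (Fin s)}
    (hZ : G.siphon Z) {a b : Fin G.n} (hab : ReflTransGen G.edge a b)
    (hb : ∃ l ∈ Z, G.ψ b l ≠ 0) : ∃ l ∈ Z, G.ψ a l ≠ 0 := by
  induction hab with
  | refl => exact hb
  | tail _ hcb ih => exact ih (hZ.2 _ _ hcb hb)

theorem prod_indicator_compl_pow {ι M : Type*} [Fintype ι] [CommMonoidWithZero M]
    (Z : Set ι) (e : ι → ℕ) [Decidable (∃ l ∈ Z, e l ≠ 0)] :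
    ∏ t, Zᶜ.indicator (fun _ => (1 : M)) t ^ e t = if ∃ l ∈ Z, e l ≠ 0 then 0 else 1 := by
  split_ifs with h
  · obtain ⟨l, hlZ, hl⟩ := h
    refine Finset.prod_eq_zero (Finset.mem_univ l) ?_
    rw [Set.indicator_of_notMem (Set.notMem_compl_iff.mpr hlZ), zero_pow hl]
  · push Not at h
    refine Finset.prod_eq_one fun t _ => ?_
    by_cases ht : t ∈ Z
    · rw [h t ht, pow_zero]
    · rw [Set.indicator_of_mem (Set.mem_compl ht), one_pow]

/-- The 0/1 indicator point of the complement of a siphon is a zero of every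
binomial of the associated event-system. -/
theorem siphon_indicator_vanishes {s : ℕ} (G : CRN s) (hwr : G.weaklyReversible)
    (Z : Set (Fin s)) (hZ : G.siphon Z) :
    G.vanishesAt (Set.indicator Zᶜ (fun _ => (1 : ℝ))) := by
  classical
  intro i j hij
  have hji : ReflTransGen G.edge j i := hwr j i (.single (Or.inr hij))
  have hiff : (∃ l ∈ Z, G.ψ i l ≠ 0) ↔ (∃ l ∈ Z, G.ψ j l ≠ 0) :=
    ⟨hZ.exists_mem_ne_zero_of_reflTransGen hji, hZ.2 i j hij⟩
  rw [prod_indicator_compl_pow, prod_indicator_compl_pow]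
  exact if_congr hiff rfl rfl
end
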